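/- Let σ_h : ℝ^{d_h} → ℝ^{d_h} be ρ_h-Lipschitz. Define h_t = σ_h(W x_t + U h_{t−1}) and h'_t = σ_h(W' x_t + U' h'_{t−1}) with h_0 = h'_0 = 0, where ‖x_t‖_2 ≤ B_x, ‖U‖_2, ‖U'‖_2 ≤ B_U, and ‖h'_j‖_2 ≤ H for all j. Then for all t ≥ 1, ‖h_t − h'_t‖_2 ≤ ρ_h B_x (Σ_{j=0}^{t−1}(ρ_h B_U)^j) ‖W − W'‖_2 + ρ_h H (Σ_{j=0}^{t−1}(ρ_h B_U)^j) ‖U − U'‖_2. -/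
import Mathlib


/-- Lipschitz continuity of RNN hidden states with respect to the weight
matrices `W` and `U` (operator norms). -/
theorem hidden_state_lipschitz_in_weights {dx dh : ℕ}
    (ρh Bx BU H : ℝ) (hρ : 0 ≤ ρh) (hBx : 0 ≤ Bx) (hBU : 0 ≤ BU) (hH : 0 ≤ H)
    (σh : EuclideanSpace ℝ (Fin dh) → EuclideanSpace ℝ (Fin dh))
    (hσ : ∀ a b, ‖σh a - σh b‖ ≤ ρh * ‖a - b‖)
    (W W' : EuclideanSpace ℝ (Fin dx) →L[ℝ] EuclideanSpace ℝ (Fin dh))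
    (U U' : EuclideanSpace ℝ (Fin dh) →L[ℝ] EuclideanSpace ℝ (Fin dh))
    (x : ℕ → EuclideanSpace ℝ (Fin dx)) (hx : ∀ t, ‖x t‖ ≤ Bx)
    (hU : ‖U‖ ≤ BU) (hU' : ‖U'‖ ≤ BU)
    (h h' : ℕ → EuclideanSpace ℝ (Fin dh)) (h0 : h 0 = 0) (h0' : h' 0 = 0)
    (hrec : ∀ t : ℕ, 1 ≤ t → h t = σh (W (x t) + U (h (t - 1))))
    (hrec' : ∀ t : ℕ, 1 ≤ t → h' t = σh (W' (x t) + U' (h' (t - 1))))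
    (hH' : ∀ j, ‖h' j‖ ≤ H) :
    ∀ t : ℕ, 1 ≤ t →
      ‖h t - h' t‖ ≤
        ρh * Bx * (∑ j ∈ Finset.range t, (ρh * BU) ^ j) * ‖W - W'‖ +
        ρh * H * (∑ j ∈ Finset.range t, (ρh * BU) ^ j) * ‖U - U'‖ := by
  suffices Hall : ∀ t : ℕ,
      ‖h t - h' t‖ ≤
        ρh * Bx * (∑ j ∈ Finset.range t, (ρh * BU) ^ j) * ‖W - W'‖ +
        ρh * H * (∑ j ∈ Finset.range t, (ρh * BU) ^ j) * ‖U - U'‖ from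
    fun t _ => Hall t
  intro t
  induction t with
  | zero => rw [h0, h0', sub_self, norm_zero, Finset.range_zero, Finset.sum_empty]; ring_nf; exact le_refl 0
  | succ t ih =>
    have hrecsucc := hrec (t + 1) (Nat.le_add_left 1 t)
    have hrecsucc' := hrec' (t + 1) (Nat.le_add_left 1 t)
    simp only [Nat.add_sub_cancel] at hrecsucc hrecsucc'
    have key : (W (x (t+1)) + U (h t)) - (W' (x (t+1)) + U' (h' t)) =
        (W - W') (x (t+1)) + U (h t - h' t) + (U - U') (h' t) := by
      simp only [ContinuousLinearMap.sub_apply, map_sub]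
      abel
    have step : ‖h (t+1) - h' (t+1)‖ ≤
        ρh * (‖W - W'‖ * Bx + BU * ‖h t - h' t‖ + ‖U - U'‖ * H) := by
      rw [hrecsucc, hrecsucc']
      refine le_trans (hσ _ _) ?_
      rw [key]
      refine mul_le_mul_of_nonneg_left ?_ hρ
      refine le_trans (norm_add₃_le) ?_
      have b1 : ‖(W - W') (x (t+1))‖ ≤ ‖W - W'‖ * Bx :=
        le_trans ((W - W').le_opNorm _)
          (mul_le_mul_of_nonneg_left (hx _) (norm_nonneg _))
      have b2 : ‖U (h t - h' t)‖ ≤ BU * ‖h t - h' t‖ :=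
        le_trans (U.le_opNorm _)
          (mul_le_mul_of_nonneg_right hU (norm_nonneg _))
      have b3 : ‖(U - U') (h' t)‖ ≤ ‖U - U'‖ * H :=
        le_trans ((U - U').le_opNorm _)
          (mul_le_mul_of_nonneg_left (hH' _) (norm_nonneg _))
      linarith
    have hgeom : (∑ j ∈ Finset.range (t+1), (ρh * BU) ^ j) =
        (ρh * BU) * (∑ j ∈ Finset.range t, (ρh * BU) ^ j) + 1 := geom_sum_succ
    rw [hgeom]
    have hrBU : 0 ≤ ρh * BU := mul_nonneg hρ hBU
    have hdW : (0:ℝ) ≤ ‖W - W'‖ := norm_nonneg _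
    have hdU : (0:ℝ) ≤ ‖U - U'‖ := norm_nonneg _
    nlinarith [mul_le_mul_of_nonneg_left ih hrBU]
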